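/- arXiv:2501.16667 — 2 statements merged into one kernel-verified Lean document; each statement's English description precedes it below -/
import Mathlib

section
/- Let α ∈ (0,1) and f₁(x) = 1 + e^{-|x|} sin(e^{|x|}) on ℝⁿ. Then there exists a constant C > 0 such that for all x with |x| > 1, the Hölder seminorm of f₁ on the closed ball of radius |x|/2 centered at x satisfies [f₁]_{C^α(B̄_{|x|/2}(x))} ≤ C e^{-(1-α)|x|/2} |x|^{1-α}. -/
open Real MeasureTheory

lemma g_lip : ∀ r ∈ Set.Ici (0:ℝ), ∀ s ∈ Set.Ici (0:ℝ),
    |Real.exp (-r) * Real.sin (Real.exp r) - Real.exp (-s) * Real.sin (Real.exp s)|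
      ≤ 2 * |r - s| := by
  have hd : ∀ r : ℝ, HasDerivAt (fun t => Real.exp (-t) * Real.sin (Real.exp t))
      (-Real.exp (-r) * Real.sin (Real.exp r)
        + Real.exp (-r) * (Real.cos (Real.exp r) * Real.exp r)) r := by
    intro r
    have h1 : HasDerivAt (fun t : ℝ => Real.exp (-t)) (-Real.exp (-r)) r := by
      simpa [Function.comp_def] using (Real.hasDerivAt_exp (-r)).comp r (hasDerivAt_neg r)
    have h2 : HasDerivAt (fun t : ℝ => Real.sin (Real.exp t))
        (Real.cos (Real.exp r) * Real.exp r) r :=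
      (Real.hasDerivAt_sin (Real.exp r)).comp r (Real.hasDerivAt_exp r)
    simpa [Pi.mul_def] using h1.mul h2
  intro r hr s hs
  have key := (convex_Ici (0:ℝ)).norm_image_sub_le_of_norm_hasDerivWithin_le
    (f := fun t => Real.exp (-t) * Real.sin (Real.exp t))
    (f' := fun t => -Real.exp (-t) * Real.sin (Real.exp t)
        + Real.exp (-t) * (Real.cos (Real.exp t) * Real.exp t))
    (C := 2) (fun t _ => (hd t).hasDerivWithinAt) ?_ hs hr
  · simpa [Real.norm_eq_abs, abs_sub_comm] using key
  · intro t ht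
    have h1 : |(-Real.exp (-t)) * Real.sin (Real.exp t)| ≤ 1 := by
      rw [abs_mul, abs_neg, abs_of_pos (Real.exp_pos _)]
      calc Real.exp (-t) * |Real.sin (Real.exp t)| ≤ 1 * 1 := by
            apply mul_le_mul (Real.exp_le_one_iff.mpr (by simpa using ht))
              (Real.abs_sin_le_one _) (abs_nonneg _) one_pos.le
        _ = 1 := by ring
    have h2 : |Real.exp (-t) * (Real.cos (Real.exp t) * Real.exp t)| ≤ 1 := by
      rw [abs_mul, abs_mul, abs_of_pos (Real.exp_pos _), abs_of_pos (Real.exp_pos _)]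
      calc Real.exp (-t) * (|Real.cos (Real.exp t)| * Real.exp t)
          ≤ Real.exp (-t) * (1 * Real.exp t) := by
            apply mul_le_mul_of_nonneg_left _ (Real.exp_pos _).le
            exact mul_le_mul_of_nonneg_right (Real.abs_cos_le_one _) (Real.exp_pos _).le
        _ = 1 := by rw [one_mul, ← Real.exp_add]; simp
    calc ‖-Real.exp (-t) * Real.sin (Real.exp t)
          + Real.exp (-t) * (Real.cos (Real.exp t) * Real.exp t)‖
        ≤ |(-Real.exp (-t)) * Real.sin (Real.exp t)|
          + |Real.exp (-t) * (Real.cos (Real.exp t) * Real.exp t)| := abs_add_le _ _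
      _ ≤ 2 := by linarith

lemma interp {a A B α : ℝ} (hα0 : 0 < α) (hα1 : α < 1) (ha : 0 ≤ a)
    (hA : 0 ≤ A) (hB : 0 ≤ B) (haA : a ≤ A) (haB : a ≤ B) :
    a ≤ B ^ α * A ^ (1 - α) := by
  rcases eq_or_lt_of_le ha with h | h
  · rw [← h]; positivity
  · have heq : a = a ^ α * a ^ (1 - α) := by
      rw [← Real.rpow_add h]; simp
    rw [heq]
    gcongr

theorem stmt_0 (n : ℕ) (hn : 1 ≤ n) (α : ℝ) (hα : α ∈ Set.Ioo (0:ℝ) 1)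
    (f₁ : EuclideanSpace ℝ (Fin n) → ℝ)
    (hf₁ : ∀ x, f₁ x = 1 + Real.exp (-‖x‖) * Real.sin (Real.exp ‖x‖)) :
    ∃ C > 0, ∀ x : EuclideanSpace ℝ (Fin n), 1 < ‖x‖ →
      ∀ z₁ ∈ Metric.closedBall x (‖x‖ / 2), ∀ z₂ ∈ Metric.closedBall x (‖x‖ / 2),
        |f₁ z₁ - f₁ z₂| ≤
          C * Real.exp (-(1 - α) * ‖x‖ / 2) * ‖x‖ ^ (1 - α) * ‖z₁ - z₂‖ ^ α := by
  obtain ⟨hα0, hα1⟩ := hα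
  refine ⟨2, by norm_num, ?_⟩
  intro x hx z₁ hz₁ z₂ hz₂
  set m : ℝ := ‖x‖ / 2 with hm
  have hm0 : 0 < m := by positivity
  have hnorm : ∀ z ∈ Metric.closedBall x m, m ≤ ‖z‖ := by
    intro z hz
    have h1 : ‖x - z‖ ≤ m := by
      rw [Metric.mem_closedBall, dist_eq_norm] at hz
      simpa [norm_sub_rev] using hz
    have h2 : ‖x‖ - ‖z‖ ≤ ‖x - z‖ := norm_sub_norm_le _ _
    have : ‖x‖ = 2 * m := by rw [hm]; ring
    linarith
  have hr₁ := hnorm z₁ hz₁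
  have hr₂ := hnorm z₂ hz₂
  have hΔ : f₁ z₁ - f₁ z₂ =
      Real.exp (-‖z₁‖) * Real.sin (Real.exp ‖z₁‖)
      - Real.exp (-‖z₂‖) * Real.sin (Real.exp ‖z₂‖) := by
    rw [hf₁, hf₁]; ring
  set a : ℝ := |f₁ z₁ - f₁ z₂| with hadef
  -- sup bound
  have hbd : ∀ z ∈ Metric.closedBall x m,
      |Real.exp (-‖z‖) * Real.sin (Real.exp ‖z‖)| ≤ Real.exp (-m) := by
    intro z hz
    rw [abs_mul, abs_of_pos (Real.exp_pos _)]
    calc Real.exp (-‖z‖) * |Real.sin (Real.exp ‖z‖)|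
        ≤ Real.exp (-‖z‖) * 1 :=
          mul_le_mul_of_nonneg_left (Real.abs_sin_le_one _) (Real.exp_pos _).le
      _ = Real.exp (-‖z‖) := mul_one _
      _ ≤ Real.exp (-m) := Real.exp_le_exp.mpr (by linarith [hnorm z hz])
  have hA : a ≤ 2 * Real.exp (-m) := by
    rw [hadef, hΔ]
    calc |Real.exp (-‖z₁‖) * Real.sin (Real.exp ‖z₁‖)
          - Real.exp (-‖z₂‖) * Real.sin (Real.exp ‖z₂‖)|
        ≤ |Real.exp (-‖z₁‖) * Real.sin (Real.exp ‖z₁‖)|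
          + |Real.exp (-‖z₂‖) * Real.sin (Real.exp ‖z₂‖)| := abs_sub _ _
      _ ≤ Real.exp (-m) + Real.exp (-m) := add_le_add (hbd z₁ hz₁) (hbd z₂ hz₂)
      _ = 2 * Real.exp (-m) := by ring
  -- Lipschitz bound
  have hB : a ≤ 2 * ‖z₁ - z₂‖ := by
    rw [hadef, hΔ]
    calc |Real.exp (-‖z₁‖) * Real.sin (Real.exp ‖z₁‖)
          - Real.exp (-‖z₂‖) * Real.sin (Real.exp ‖z₂‖)|
        ≤ 2 * |‖z₁‖ - ‖z₂‖| :=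
          g_lip ‖z₁‖ (norm_nonneg _) ‖z₂‖ (norm_nonneg _)
      _ ≤ 2 * ‖z₁ - z₂‖ := by
          have := abs_norm_sub_norm_le z₁ z₂
          linarith
  have key : a ≤ (2 * ‖z₁ - z₂‖) ^ α * (2 * Real.exp (-m)) ^ (1 - α) :=
    interp hα0 hα1 (abs_nonneg _) (by positivity) (by positivity) hA hB
  have hsplit : (2 * ‖z₁ - z₂‖) ^ α * (2 * Real.exp (-m)) ^ (1 - α)
      = 2 * Real.exp (-(1 - α) * ‖x‖ / 2) * ‖z₁ - z₂‖ ^ α := by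
    rw [Real.mul_rpow (by norm_num) (norm_nonneg _),
        Real.mul_rpow (by norm_num) (Real.exp_pos _).le,
        ← Real.exp_mul]
    have h2 : (2:ℝ) ^ α * (2:ℝ) ^ (1 - α) = 2 := by
      rw [← Real.rpow_add (by norm_num)]; norm_num
    have hexp : -m * (1 - α) = -(1 - α) * ‖x‖ / 2 := by rw [hm]; ring
    rw [hexp]
    linear_combination (‖z₁ - z₂‖ ^ α * Real.exp (-(1 - α) * ‖x‖ / 2)) * h2
  have hone : (1:ℝ) ≤ ‖x‖ ^ (1 - α) :=
    Real.one_le_rpow hx.le (by linarith)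
  calc a ≤ 2 * Real.exp (-(1 - α) * ‖x‖ / 2) * ‖z₁ - z₂‖ ^ α := by
        rw [← hsplit]; exact key
    _ = 2 * Real.exp (-(1 - α) * ‖x‖ / 2) * 1 * ‖z₁ - z₂‖ ^ α := by ring
    _ ≤ 2 * Real.exp (-(1 - α) * ‖x‖ / 2) * ‖x‖ ^ (1 - α) * ‖z₁ - z₂‖ ^ α := by
        gcongr
end

section
/- Let s ∈ (0,1), n > 2s, and let u ∈ C(ℝⁿ) be bounded with |u(x)| ≤ c'|x|^{-n} for |x| > R' where c' > 0 and R' > 1. Then there exists C > 0 such that |∫_{ℝⁿ} u(y)/|x-y|^{n-2s} dy| ≤ C |x|^{2s-n} ln|x| for all |x| > 2R'. -/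
open Real MeasureTheory

open scoped ENNReal

private lemma polar_lintegral' {n : ℕ} (hn : n ≠ 0) (g : ℝ → ℝ≥0∞) (hg : Measurable g) :
    ∫⁻ y : EuclideanSpace ℝ (Fin n), g ‖y‖ =
      (volume : Measure (EuclideanSpace ℝ (Fin n))).toSphere Set.univ *
        ∫⁻ t in Set.Ioi (0:ℝ), ENNReal.ofReal (t ^ (n - 1)) * g t := by
  haveI : Nonempty (Fin n) := Fin.pos_iff_nonempty.mp (Nat.pos_of_ne_zero hn)
  haveI : Nontrivial (EuclideanSpace ℝ (Fin n)) := by infer_instance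
  set μ : Measure (EuclideanSpace ℝ (Fin n)) := volume with hμ
  have hdim : Module.finrank ℝ (EuclideanSpace ℝ (Fin n)) = n := finrank_euclideanSpace_fin
  have hmeas : Measurable ((g ∘ Subtype.val) ∘
      (Prod.snd : (Metric.sphere (0 : EuclideanSpace ℝ (Fin n)) 1) × (Set.Ioi (0:ℝ)) → (Set.Ioi (0:ℝ)))) :=
    (hg.comp measurable_subtype_coe).comp measurable_snd
  calc ∫⁻ y : EuclideanSpace ℝ (Fin n), g ‖y‖ ∂μ
      = ∫⁻ y in ({0}ᶜ : Set (EuclideanSpace ℝ (Fin n))), g ‖y‖ ∂μ := by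
        rw [restrict_compl_singleton]
    _ = ∫⁻ z : (({0}ᶜ : Set (EuclideanSpace ℝ (Fin n)))), g ‖z.1‖ ∂(μ.comap Subtype.val) :=
        (lintegral_subtype_comap (measurableSet_singleton 0).compl _).symm
    _ = ∫⁻ z : (({0}ᶜ : Set (EuclideanSpace ℝ (Fin n)))),
          ((g ∘ Subtype.val) ∘ Prod.snd) ((homeomorphUnitSphereProd (EuclideanSpace ℝ (Fin n))) z)
          ∂(μ.comap Subtype.val) := lintegral_congr fun z => by simp
    _ = ∫⁻ p : (Metric.sphere (0 : EuclideanSpace ℝ (Fin n)) 1) × (Set.Ioi (0:ℝ)),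
          ((g ∘ Subtype.val) ∘ Prod.snd) p
          ∂(μ.toSphere.prod (.volumeIoiPow (Module.finrank ℝ (EuclideanSpace ℝ (Fin n)) - 1))) :=
        μ.measurePreserving_homeomorphUnitSphereProd.lintegral_comp hmeas
    _ = μ.toSphere Set.univ * ∫⁻ x : (Set.Ioi (0:ℝ)), g x ∂(Measure.volumeIoiPow (n - 1)) := by
        rw [hdim, lintegral_prod _ hmeas.aemeasurable]
        simp [lintegral_const, mul_comm]
    _ = _ := by
        congr 1
        rw [Measure.volumeIoiPow]
        refine Eq.trans (lintegral_withDensity_eq_lintegral_mul _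
          (f := fun r : (Set.Ioi (0:ℝ)) => ENNReal.ofReal (r.1 ^ (n - 1))) (by fun_prop)
          (hg.comp measurable_subtype_coe)) ?_
        rw [← lintegral_subtype_comap measurableSet_Ioi
          (fun t => ENNReal.ofReal (t ^ (n - 1)) * g t)]
        exact lintegral_congr fun t => rfl

private lemma reduce_radial' {n : ℕ} (hn : n ≠ 0) (c p : ℝ) (hc : 0 ≤ c) (S : Set ℝ)
    (hS : MeasurableSet S) (hS0 : S ⊆ Set.Ioi 0) :
    ∫⁻ y : EuclideanSpace ℝ (Fin n),
        S.indicator (fun t => ENNReal.ofReal (c * t ^ p)) ‖y‖ =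
      (volume : Measure (EuclideanSpace ℝ (Fin n))).toSphere Set.univ *
        (ENNReal.ofReal c * ∫⁻ t in S, ENNReal.ofReal (t ^ ((n:ℝ) - 1 + p))) := by
  have hg : Measurable (S.indicator (fun t : ℝ => ENNReal.ofReal (c * t ^ p))) :=
    (by fun_prop : Measurable (fun t : ℝ => ENNReal.ofReal (c * t ^ p))).indicator hS
  rw [polar_lintegral' hn _ hg]
  congr 1
  have key : ∀ t : ℝ, ENNReal.ofReal (t ^ (n - 1)) *
        S.indicator (fun t => ENNReal.ofReal (c * t ^ p)) t =
      S.indicator (fun t => ENNReal.ofReal c * ENNReal.ofReal (t ^ ((n:ℝ) - 1 + p))) t := by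
    intro t
    by_cases ht : t ∈ S
    · have ht0 : (0:ℝ) < t := hS0 ht
      rw [Set.indicator_of_mem ht, Set.indicator_of_mem ht, ← ENNReal.ofReal_mul (by positivity),
        ← ENNReal.ofReal_mul hc]
      congr 1
      rw [Real.rpow_add ht0, ← Real.rpow_natCast t (n - 1)]
      have : ((n - 1 : ℕ) : ℝ) = (n : ℝ) - 1 := by
        have := Nat.one_le_iff_ne_zero.mpr hn
        push_cast [Nat.cast_sub this]
        ring
      rw [this]; ring
    · rw [Set.indicator_of_notMem ht, Set.indicator_of_notMem ht, mul_zero]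
  rw [lintegral_congr key, lintegral_indicator hS, Measure.restrict_restrict hS,
    Set.inter_eq_self_of_subset_left hS0,
    lintegral_const_mul' _ _ ENNReal.ofReal_ne_top]

private lemma oneD_Ioc' {a b q : ℝ} (h0 : 0 ≤ a) (hab : a ≤ b) (hq : (-1:ℝ) < q) :
    ∫⁻ t in Set.Ioc a b, ENNReal.ofReal (t ^ q) =
      ENNReal.ofReal ((b ^ (q+1) - a ^ (q+1)) / (q+1)) := by
  have hint : IntegrableOn (fun t : ℝ => t ^ q) (Set.Ioc a b) :=
    (intervalIntegrable_iff_integrableOn_Ioc_of_le hab).mp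
      (intervalIntegral.intervalIntegrable_rpow' hq)
  rw [← ofReal_integral_eq_lintegral_ofReal hint ?_]
  · congr 1
    rw [← intervalIntegral.integral_of_le hab, integral_rpow (Or.inl hq)]
  · filter_upwards [ae_restrict_mem measurableSet_Ioc] with t ht
    exact rpow_nonneg (h0.trans_lt ht.1).le _

private lemma oneD_Ioc_inv' {a b : ℝ} (h0 : 0 < a) (hab : a ≤ b) :
    ∫⁻ t in Set.Ioc a b, ENNReal.ofReal (t ^ (-1 : ℝ)) =
      ENNReal.ofReal (Real.log (b / a)) := by
  have hb : 0 < b := h0.trans_le hab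
  have hne : ∀ t ∈ Set.uIcc a b, t ≠ 0 := by
    intro t ht
    rw [Set.uIcc_of_le hab] at ht
    exact (h0.trans_le ht.1).ne'
  have hint : IntegrableOn (fun t : ℝ => t⁻¹) (Set.Ioc a b) :=
    (intervalIntegrable_iff_integrableOn_Ioc_of_le hab).mp
      (intervalIntegral.intervalIntegrable_inv hne continuousOn_id)
  have heq : ∀ t ∈ Set.Ioc a b, ENNReal.ofReal (t ^ (-1:ℝ)) = ENNReal.ofReal t⁻¹ := by
    intro t ht; rw [Real.rpow_neg_one]
  rw [setLIntegral_congr_fun measurableSet_Ioc heq,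
    ← ofReal_integral_eq_lintegral_ofReal hint ?_]
  · congr 1
    rw [← intervalIntegral.integral_of_le hab, integral_inv_of_pos h0 hb]
  · filter_upwards [ae_restrict_mem measurableSet_Ioc] with t ht
    exact inv_nonneg.mpr (h0.trans ht.1).le

private lemma oneD_Ioi' {c q : ℝ} (hc : 0 < c) (hq : q < -1) :
    ∫⁻ t in Set.Ioi c, ENNReal.ofReal (t ^ q) =
      ENNReal.ofReal (-c ^ (q+1) / (q+1)) := by
  rw [← ofReal_integral_eq_lintegral_ofReal (integrableOn_Ioi_rpow_of_lt hq hc) ?_]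
  · rw [integral_Ioi_rpow_of_lt hq hc]
  · filter_upwards [ae_restrict_mem measurableSet_Ioi] with t ht
    exact rpow_nonneg (hc.trans ht).le _

theorem stmt_8 (n : ℕ) (s c' R' : ℝ) (hs : s ∈ Set.Ioo (0:ℝ) 1) (hn : 2 * s < n)
    (hc' : 0 < c') (hR' : 1 < R')
    (M : ℝ) (u : EuclideanSpace ℝ (Fin n) → ℝ) (hu : Continuous u)
    (hb : ∀ x, |u x| ≤ M)
    (hdec : ∀ x : EuclideanSpace ℝ (Fin n), R' < ‖x‖ → |u x| ≤ c' * ‖x‖ ^ (-(n : ℝ))) :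
    ∃ C > 0, ∀ x : EuclideanSpace ℝ (Fin n), 2 * R' < ‖x‖ →
      |∫ y, u y / ‖x - y‖ ^ ((n : ℝ) - 2 * s)| ≤
        C * ‖x‖ ^ (2 * s - (n : ℝ)) * Real.log ‖x‖ := by
  obtain ⟨hs0, hs1⟩ := hs
  have hn0 : (0:ℝ) < n := lt_trans (by linarith) hn
  have hnn : n ≠ 0 := by exact_mod_cast hn0.ne'
  haveI : Nonempty (Fin n) := Fin.pos_iff_nonempty.mp (Nat.pos_of_ne_zero hnn)
  haveI : Nontrivial (EuclideanSpace ℝ (Fin n)) := by infer_instance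
  have hM : 0 ≤ M := (abs_nonneg _).trans (hb 0)
  have hns : (0:ℝ) < (n:ℝ) - 2*s := by linarith
  have hR'0 : (0:ℝ) < R' := lt_trans one_pos hR'
  set σ : ℝ≥0∞ := (volume : Measure (EuclideanSpace ℝ (Fin n))).toSphere Set.univ with hσdef
  have hσtop : σ ≠ ⊤ := measure_ne_top _ _
  set K := σ.toReal with hKdef
  have hσK : σ = ENNReal.ofReal K := by rw [hKdef, ENNReal.ofReal_toReal hσtop]
  have hK : 0 ≤ K := ENNReal.toReal_nonneg
  have hlog2 : 0 < Real.log 2 := Real.log_pos one_lt_two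
  have h2pow : (0:ℝ) < 2 ^ ((n:ℝ) - 2*s) := rpow_pos_of_pos two_pos _
  set A₁ := c' / (2*s) * 2 ^ ((n:ℝ) - 2*s) with hA₁
  set A₂ := M * 2 ^ ((n:ℝ) - 2*s) * R' ^ ((n:ℝ)) / (n:ℝ) with hA₂
  set A₃ := c' * 2 ^ ((n:ℝ) - 2*s) * 2 with hA₃
  set A₄ := c' / ((n:ℝ) - 2*s) with hA₄
  have hA₁0 : 0 ≤ A₁ := mul_nonneg (div_nonneg hc'.le (by linarith)) h2pow.le
  have hA₂0 : 0 ≤ A₂ :=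
    div_nonneg (mul_nonneg (mul_nonneg hM h2pow.le) (rpow_nonneg hR'0.le _)) hn0.le
  have hA₃0 : 0 ≤ A₃ := mul_nonneg (mul_nonneg hc'.le h2pow.le) (by norm_num)
  have hA₄0 : 0 ≤ A₄ := div_nonneg hc'.le hns.le
  have hCpos : 0 < K * ((A₁ + A₂ + A₄) / Real.log 2 + A₃) + 1 := by
    have : 0 ≤ K * ((A₁ + A₂ + A₄) / Real.log 2 + A₃) :=
      mul_nonneg hK (add_nonneg (div_nonneg (by linarith) hlog2.le) hA₃0)
    linarith
  refine ⟨K * ((A₁ + A₂ + A₄) / Real.log 2 + A₃) + 1, hCpos, fun x hx => ?_⟩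
  set r := ‖x‖ with hrdef
  have hr2 : (2:ℝ) < r := by linarith
  have hr0 : (0:ℝ) < r := by linarith
  set ρ := r/2 with hρdef
  have hρ0 : 0 < ρ := by rw [hρdef]; linarith
  have hρR' : R' < ρ := by rw [hρdef]; linarith
  have hL : Real.log 2 < Real.log r := Real.log_lt_log two_pos hr2
  have hL0 : 0 < Real.log r := lt_trans hlog2 hL
  set P := r ^ (2*s - (n:ℝ)) with hP
  have hP0 : 0 < P := rpow_pos_of_pos hr0 _
  -- constants for the four regions
  set c₁ := c' * ρ ^ (-(n:ℝ)) with hc₁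
  set c₂ := M * ρ ^ (2*s - (n:ℝ)) with hc₂
  set c₃ := c' * ρ ^ (2*s - (n:ℝ)) with hc₃
  set c₄ := c' * 2 ^ ((n:ℝ) - 2*s) with hc₄
  have hc₁0 : 0 ≤ c₁ := mul_nonneg hc'.le (rpow_nonneg hρ0.le _)
  have hc₂0 : 0 ≤ c₂ := mul_nonneg hM (rpow_nonneg hρ0.le _)
  have hc₃0 : 0 ≤ c₃ := mul_nonneg hc'.le (rpow_nonneg hρ0.le _)
  have hc₄0 : 0 ≤ c₄ := mul_nonneg hc'.le h2pow.le
  -- the four radial majorants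
  set G₁ : ℝ → ℝ≥0∞ :=
    (Set.Ioc 0 ρ).indicator (fun t => ENNReal.ofReal (c₁ * t ^ (2*s - (n:ℝ)))) with hG₁
  set G₂ : ℝ → ℝ≥0∞ :=
    (Set.Ioc 0 R').indicator (fun t => ENNReal.ofReal (c₂ * t ^ (0:ℝ))) with hG₂
  set G₃ : ℝ → ℝ≥0∞ :=
    (Set.Ioc R' (2*r)).indicator (fun t => ENNReal.ofReal (c₃ * t ^ (-(n:ℝ)))) with hG₃
  set G₄ : ℝ → ℝ≥0∞ :=
    (Set.Ioi (2*r)).indicator (fun t => ENNReal.ofReal (c₄ * t ^ (2*s - 2*(n:ℝ)))) with hG₄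
  have hG₁m : Measurable G₁ := by
    rw [hG₁]; exact Measurable.indicator (by fun_prop) measurableSet_Ioc
  have hG₂m : Measurable G₂ := by
    rw [hG₂]; exact Measurable.indicator (by fun_prop) measurableSet_Ioc
  have hG₃m : Measurable G₃ := by
    rw [hG₃]; exact Measurable.indicator (by fun_prop) measurableSet_Ioc
  have hG₄m : Measurable G₄ := by
    rw [hG₄]; exact Measurable.indicator (by fun_prop) measurableSet_Ioi
  -- rewrite the norm of the integrand
  have hfnorm : ∀ y : EuclideanSpace ℝ (Fin n),
      ENNReal.ofReal ‖u y / ‖x - y‖ ^ ((n:ℝ) - 2*s)‖ =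
      ENNReal.ofReal (|u y| * ‖x - y‖ ^ (2*s - (n:ℝ))) := by
    intro y
    rw [Real.norm_eq_abs, abs_div, abs_of_nonneg (rpow_nonneg (norm_nonneg _) _)]
    congr 1
    rcases eq_or_ne ‖x - y‖ 0 with h | h
    · rw [h, Real.zero_rpow hns.ne', Real.zero_rpow (by linarith : 2*s - (n:ℝ) ≠ 0),
        div_zero, mul_zero]
    · have h0 : 0 < ‖x - y‖ := (norm_nonneg _).lt_of_ne (Ne.symm h)
      rw [div_eq_mul_inv, ← Real.rpow_neg h0.le, neg_sub]
  -- a.e. pointwise bound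
  have hae0 : ∀ᵐ y : EuclideanSpace ℝ (Fin n), y ≠ 0 := by
    rw [ae_iff]
    simp only [ne_eq, not_not, Set.setOf_eq_eq_singleton]
    exact measure_singleton 0
  have hae : ∀ᵐ y : EuclideanSpace ℝ (Fin n),
      ENNReal.ofReal ‖u y / ‖x - y‖ ^ ((n:ℝ) - 2*s)‖ ≤
        G₁ ‖x - y‖ + G₂ ‖y‖ + G₃ ‖y‖ + G₄ ‖y‖ := by
    filter_upwards [hae0] with y hy0
    rw [hfnorm y]
    rcases le_or_gt ‖x - y‖ ρ with hcase | hcase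
    · -- near the singularity
      rcases ((norm_nonneg (x - y)).eq_or_lt') with hz | hz
      · have hz' : ‖x - y‖ = 0 := hz
        rw [hz', Real.zero_rpow (by linarith : 2*s - (n:ℝ) ≠ 0), mul_zero, ENNReal.ofReal_zero]
        exact zero_le
      · have hmem : ‖x - y‖ ∈ Set.Ioc 0 ρ := ⟨hz, hcase⟩
        have hylb : ρ ≤ ‖y‖ := by
          have h1 : ‖x‖ - ‖y‖ ≤ ‖x - y‖ := norm_sub_norm_le x y
          rw [hρdef] at hcase ⊢
          rw [← hrdef] at h1
          linarith
        have hu1 : |u y| ≤ c₁ := by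
          rw [hc₁]
          refine (hdec y (lt_of_lt_of_le hρR' hylb)).trans ?_
          exact mul_le_mul_of_nonneg_left
            (Real.rpow_le_rpow_of_nonpos hρ0 hylb (by linarith)) hc'.le
        refine le_trans ?_ (le_add_right (le_add_right le_self_add : G₁ ‖x - y‖ ≤ _))
        rw [hG₁, Set.indicator_of_mem hmem]
        exact ENNReal.ofReal_le_ofReal
          (mul_le_mul_of_nonneg_right hu1 (rpow_nonneg (norm_nonneg _) _))
    · -- away from the singularity
      have hxy0 : 0 < ‖x - y‖ := lt_trans hρ0 hcase
      have hkernel : ‖x - y‖ ^ (2*s - (n:ℝ)) ≤ ρ ^ (2*s - (n:ℝ)) :=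
        Real.rpow_le_rpow_of_nonpos hρ0 hcase.le (by linarith)
      rcases le_or_gt ‖y‖ R' with hy | hy
      · -- bounded region
        have hmem : ‖y‖ ∈ Set.Ioc 0 R' := ⟨norm_pos_iff.mpr hy0, hy⟩
        refine le_trans ?_ (le_add_right (le_add_right le_add_self : G₂ ‖y‖ ≤ _))
        rw [hG₂, Set.indicator_of_mem hmem]
        refine ENNReal.ofReal_le_ofReal ?_
        rw [Real.rpow_zero, mul_one, hc₂]
        exact mul_le_mul (hb y) hkernel (rpow_nonneg (norm_nonneg _) _) hM
      · rcases le_or_gt ‖y‖ (2*r) with hy2 | hy2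
        · -- middle annulus
          have hmem : ‖y‖ ∈ Set.Ioc R' (2*r) := ⟨hy, hy2⟩
          refine le_trans ?_ (le_add_right (le_add_self : G₃ ‖y‖ ≤ _))
          rw [hG₃, Set.indicator_of_mem hmem]
          refine ENNReal.ofReal_le_ofReal ?_
          have step : |u y| * ‖x - y‖ ^ (2*s - (n:ℝ)) ≤
              (c' * ‖y‖ ^ (-(n:ℝ))) * ρ ^ (2*s - (n:ℝ)) :=
            mul_le_mul (hdec y hy) hkernel (rpow_nonneg (norm_nonneg _) _)
              (mul_nonneg hc'.le (rpow_nonneg (norm_nonneg _) _))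
          refine step.trans_eq ?_
          rw [hc₃]; ring
        · -- far region
          have hy0' : (0:ℝ) < ‖y‖ := by linarith
          refine le_trans ?_ (le_add_self : G₄ ‖y‖ ≤ _)
          have hmem : ‖y‖ ∈ Set.Ioi (2*r) := hy2
          rw [hG₄, Set.indicator_of_mem hmem]
          refine ENNReal.ofReal_le_ofReal ?_
          have h2 : ‖y‖/2 ≤ ‖x - y‖ := by
            have h3 : ‖y‖ - ‖x‖ ≤ ‖x - y‖ := by
              rw [norm_sub_rev]; exact norm_sub_norm_le y x
            rw [← hrdef] at h3
            linarith
          have hker : ‖x - y‖ ^ (2*s - (n:ℝ)) ≤ (‖y‖/2) ^ (2*s - (n:ℝ)) :=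
            Real.rpow_le_rpow_of_nonpos (by positivity) h2 (by linarith)
          have step : |u y| * ‖x - y‖ ^ (2*s - (n:ℝ)) ≤
              (c' * ‖y‖ ^ (-(n:ℝ))) * ((‖y‖/2) ^ (2*s - (n:ℝ))) :=
            mul_le_mul (hdec y (by linarith)) hker (rpow_nonneg (norm_nonneg _) _)
              (mul_nonneg hc'.le (rpow_nonneg (norm_nonneg _) _))
          refine step.trans_eq ?_
          have merge : ‖y‖ ^ (-(n:ℝ)) * ‖y‖ ^ (2*s - (n:ℝ)) = ‖y‖ ^ (2*s - 2*(n:ℝ)) := by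
            rw [← Real.rpow_add hy0']; congr 1; ring
          rw [div_eq_mul_inv, Real.mul_rpow hy0'.le (by norm_num),
            Real.inv_rpow (by norm_num : (0:ℝ) ≤ 2), ← Real.rpow_neg (by norm_num : (0:ℝ) ≤ 2),
            neg_sub, hc₄]
          calc c' * ‖y‖ ^ (-(n:ℝ)) * (‖y‖ ^ (2*s - (n:ℝ)) * (2:ℝ) ^ ((n:ℝ) - 2*s))
              = c' * (2:ℝ) ^ ((n:ℝ) - 2*s) * (‖y‖ ^ (-(n:ℝ)) * ‖y‖ ^ (2*s - (n:ℝ))) := by ring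
            _ = c' * (2:ℝ) ^ ((n:ℝ) - 2*s) * ‖y‖ ^ (2*s - 2*(n:ℝ)) := by rw [merge]
  -- evaluate the four lintegrals
  have H₁ : (∫⁻ y : EuclideanSpace ℝ (Fin n), G₁ ‖x - y‖) =
      ENNReal.ofReal (K * (c₁ * (ρ ^ (2*s) / (2*s)))) := by
    have htrans : (∫⁻ y : EuclideanSpace ℝ (Fin n), G₁ ‖x - y‖) =
        ∫⁻ y : EuclideanSpace ℝ (Fin n), G₁ ‖y‖ :=
      (Measure.measurePreserving_sub_left volume x).lintegral_comp (hG₁m.comp measurable_norm)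
    rw [htrans, hG₁, reduce_radial' hnn c₁ _ hc₁0 _ measurableSet_Ioc (fun t ht => ht.1),
      oneD_Ioc' le_rfl hρ0.le (by linarith), ← hσdef, hσK,
      ← ENNReal.ofReal_mul hc₁0, ← ENNReal.ofReal_mul hK]
    congr 2
    rw [show (n:ℝ) - 1 + (2*s - (n:ℝ)) + 1 = 2*s from by ring,
      Real.zero_rpow (by linarith : 2*s ≠ 0), sub_zero]
  have H₂ : (∫⁻ y : EuclideanSpace ℝ (Fin n), G₂ ‖y‖) =
      ENNReal.ofReal (K * (c₂ * (R' ^ ((n:ℝ)) / (n:ℝ)))) := by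
    rw [hG₂, reduce_radial' hnn c₂ _ hc₂0 _ measurableSet_Ioc (fun t ht => ht.1),
      oneD_Ioc' le_rfl hR'0.le (by linarith), ← hσdef, hσK,
      ← ENNReal.ofReal_mul hc₂0, ← ENNReal.ofReal_mul hK]
    congr 2
    rw [show (n:ℝ) - 1 + 0 + 1 = (n:ℝ) from by ring,
      Real.zero_rpow hn0.ne', sub_zero]
  have H₃ : (∫⁻ y : EuclideanSpace ℝ (Fin n), G₃ ‖y‖) =
      ENNReal.ofReal (K * (c₃ * Real.log (2*r/R'))) := by
    rw [hG₃, reduce_radial' hnn c₃ _ hc₃0 _ measurableSet_Ioc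
        (fun t ht => lt_trans hR'0 ht.1),
      show (n:ℝ) - 1 + -(n:ℝ) = (-1:ℝ) from by ring,
      oneD_Ioc_inv' hR'0 (by linarith), ← hσdef, hσK,
      ← ENNReal.ofReal_mul hc₃0, ← ENNReal.ofReal_mul hK]
  have H₄ : (∫⁻ y : EuclideanSpace ℝ (Fin n), G₄ ‖y‖) =
      ENNReal.ofReal (K * (c₄ * ((2:ℝ) ^ (2*s - (n:ℝ)) * P / ((n:ℝ) - 2*s)))) := by
    rw [hG₄, reduce_radial' hnn c₄ _ hc₄0 _ measurableSet_Ioi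
        (fun t ht => lt_trans (by linarith : (0:ℝ) < 2*r) ht),
      oneD_Ioi' (by linarith) (by linarith), ← hσdef, hσK,
      ← ENNReal.ofReal_mul hc₄0, ← ENNReal.ofReal_mul hK]
    congr 2
    rw [show (n:ℝ) - 1 + (2*s - 2*(n:ℝ)) + 1 = 2*s - (n:ℝ) from by ring,
      Real.mul_rpow (by norm_num : (0:ℝ) ≤ 2) hr0.le, ← hP]
    rw [show (n:ℝ) - 2*s = -(2*s - (n:ℝ)) from by ring, div_neg, neg_div]
  -- numeric bookkeeping
  have eρ : ρ ^ (2*s - (n:ℝ)) = 2 ^ ((n:ℝ) - 2*s) * P := by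
    rw [hρdef, hP, div_eq_mul_inv, Real.mul_rpow hr0.le (by norm_num),
      Real.inv_rpow (by norm_num : (0:ℝ) ≤ 2), ← Real.rpow_neg (by norm_num : (0:ℝ) ≤ 2),
      neg_sub]
    ring
  have eρ' : ρ ^ (-(n:ℝ)) * ρ ^ (2*s) = ρ ^ (2*s - (n:ℝ)) := by
    rw [← Real.rpow_add hρ0]; congr 1; ring
  have t₁ : c₁ * (ρ ^ (2*s) / (2*s)) = A₁ * P := by
    rw [hc₁]
    calc c' * ρ ^ (-(n:ℝ)) * (ρ ^ (2*s) / (2*s))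
        = c' / (2*s) * (ρ ^ (-(n:ℝ)) * ρ ^ (2*s)) := by ring
      _ = c' / (2*s) * ρ ^ (2*s - (n:ℝ)) := by rw [eρ']
      _ = c' / (2*s) * (2 ^ ((n:ℝ) - 2*s) * P) := by rw [eρ]
      _ = A₁ * P := by rw [hA₁]; ring
  have t₂ : c₂ * (R' ^ ((n:ℝ)) / (n:ℝ)) = A₂ * P := by
    rw [hc₂, hA₂, eρ]; ring
  have elog : Real.log (2*r/R') ≤ 2 * Real.log r := by
    rw [Real.log_div (by positivity) hR'0.ne',
      Real.log_mul (by norm_num : (2:ℝ) ≠ 0) hr0.ne']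
    have := Real.log_nonneg hR'.le
    linarith
  have t₃ : c₃ * Real.log (2*r/R') ≤ A₃ * (P * Real.log r) := by
    calc c₃ * Real.log (2*r/R') ≤ c₃ * (2 * Real.log r) :=
          mul_le_mul_of_nonneg_left elog hc₃0
      _ = A₃ * (P * Real.log r) := by rw [hc₃, hA₃, eρ]; ring
  have eDD' : (2:ℝ) ^ ((n:ℝ) - 2*s) * (2:ℝ) ^ (2*s - (n:ℝ)) = 1 := by
    rw [← Real.rpow_add two_pos, show ((n:ℝ) - 2*s) + (2*s - (n:ℝ)) = 0 from by ring,
      Real.rpow_zero]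
  have t₄ : c₄ * ((2:ℝ) ^ (2*s - (n:ℝ)) * P / ((n:ℝ) - 2*s)) = A₄ * P := by
    rw [hc₄]
    calc c' * 2 ^ ((n:ℝ) - 2*s) * ((2:ℝ) ^ (2*s - (n:ℝ)) * P / ((n:ℝ) - 2*s))
        = c' * ((2:ℝ) ^ ((n:ℝ) - 2*s) * (2:ℝ) ^ (2*s - (n:ℝ))) * P / ((n:ℝ) - 2*s) := by ring
      _ = c' * 1 * P / ((n:ℝ) - 2*s) := by rw [eDD']
      _ = A₄ * P := by rw [hA₄]; ring
  have hV₃0 : 0 ≤ Real.log (2*r/R') := Real.log_nonneg ((one_le_div hR'0).mpr (by linarith))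
  have hT₁0 : 0 ≤ K * (c₁ * (ρ ^ (2*s) / (2*s))) :=
    mul_nonneg hK (mul_nonneg hc₁0 (div_nonneg (rpow_nonneg hρ0.le _) (by linarith)))
  have hT₂0 : 0 ≤ K * (c₂ * (R' ^ ((n:ℝ)) / (n:ℝ))) :=
    mul_nonneg hK (mul_nonneg hc₂0 (div_nonneg (rpow_nonneg hR'0.le _) hn0.le))
  have hT₃0 : 0 ≤ K * (c₃ * Real.log (2*r/R')) :=
    mul_nonneg hK (mul_nonneg hc₃0 hV₃0)
  have hT₄0 : 0 ≤ K * (c₄ * ((2:ℝ) ^ (2*s - (n:ℝ)) * P / ((n:ℝ) - 2*s))) :=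
    mul_nonneg hK (mul_nonneg hc₄0
      (div_nonneg (mul_nonneg (rpow_nonneg (by norm_num) _) hP0.le) hns.le))
  have hnum : K * (c₁ * (ρ ^ (2*s) / (2*s))) + K * (c₂ * (R' ^ ((n:ℝ)) / (n:ℝ))) +
      K * (c₃ * Real.log (2*r/R')) +
      K * (c₄ * ((2:ℝ) ^ (2*s - (n:ℝ)) * P / ((n:ℝ) - 2*s))) ≤
      (K * ((A₁ + A₂ + A₄) / Real.log 2 + A₃) + 1) * P * Real.log r := by
    rw [t₁, t₂, t₄]
    have piece : ∀ A : ℝ, 0 ≤ A →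
        K * (A * P) ≤ K * (A / Real.log 2 * (P * Real.log r)) := by
      intro A hA
      have e : A * P = A / Real.log 2 * (P * Real.log 2) := by field_simp
      rw [e]
      exact mul_le_mul_of_nonneg_left
        (mul_le_mul_of_nonneg_left (mul_le_mul_of_nonneg_left hL.le hP0.le)
          (div_nonneg hA hlog2.le)) hK
    have h3 : K * (c₃ * Real.log (2*r/R')) ≤ K * (A₃ * (P * Real.log r)) :=
      mul_le_mul_of_nonneg_left t₃ hK
    have expand : (K * ((A₁ + A₂ + A₄) / Real.log 2 + A₃) + 1) * P * Real.log r =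
        K * (A₁ / Real.log 2 * (P * Real.log r)) + K * (A₂ / Real.log 2 * (P * Real.log r)) +
        K * (A₄ / Real.log 2 * (P * Real.log r)) + K * (A₃ * (P * Real.log r)) +
        P * Real.log r := by ring
    have hPL : 0 ≤ P * Real.log r := mul_nonneg hP0.le hL0.le
    linarith [piece A₁ hA₁0, piece A₂ hA₂0, piece A₄ hA₄0]
  -- main lintegral estimate
  have main : (∫⁻ y : EuclideanSpace ℝ (Fin n),
        ENNReal.ofReal ‖u y / ‖x - y‖ ^ ((n:ℝ) - 2*s)‖) ≤
      ENNReal.ofReal ((K * ((A₁ + A₂ + A₄) / Real.log 2 + A₃) + 1) * P * Real.log r) := by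
    calc (∫⁻ y : EuclideanSpace ℝ (Fin n), ENNReal.ofReal ‖u y / ‖x - y‖ ^ ((n:ℝ) - 2*s)‖)
        ≤ ∫⁻ y : EuclideanSpace ℝ (Fin n), (G₁ ‖x - y‖ + G₂ ‖y‖ + G₃ ‖y‖ + G₄ ‖y‖) :=
          lintegral_mono_ae hae
      _ = (∫⁻ y : EuclideanSpace ℝ (Fin n), G₁ ‖x - y‖) +
          (∫⁻ y : EuclideanSpace ℝ (Fin n), G₂ ‖y‖) +
          (∫⁻ y : EuclideanSpace ℝ (Fin n), G₃ ‖y‖) +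
          (∫⁻ y : EuclideanSpace ℝ (Fin n), G₄ ‖y‖) := by
          rw [lintegral_add_right (g := fun y => G₄ ‖y‖) _ (hG₄m.comp measurable_norm),
            lintegral_add_right (g := fun y => G₃ ‖y‖) _ (hG₃m.comp measurable_norm),
            lintegral_add_right (g := fun y => G₂ ‖y‖) _ (hG₂m.comp measurable_norm)]
      _ = ENNReal.ofReal (K * (c₁ * (ρ ^ (2*s) / (2*s)))) +
          ENNReal.ofReal (K * (c₂ * (R' ^ ((n:ℝ)) / (n:ℝ)))) +
          ENNReal.ofReal (K * (c₃ * Real.log (2*r/R'))) +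
          ENNReal.ofReal (K * (c₄ * ((2:ℝ) ^ (2*s - (n:ℝ)) * P / ((n:ℝ) - 2*s)))) := by
          rw [H₁, H₂, H₃, H₄]
      _ = ENNReal.ofReal (K * (c₁ * (ρ ^ (2*s) / (2*s))) + K * (c₂ * (R' ^ ((n:ℝ)) / (n:ℝ))) +
          K * (c₃ * Real.log (2*r/R')) +
          K * (c₄ * ((2:ℝ) ^ (2*s - (n:ℝ)) * P / ((n:ℝ) - 2*s)))) := by
          rw [← ENNReal.ofReal_add hT₁0 hT₂0, ← ENNReal.ofReal_add (add_nonneg hT₁0 hT₂0) hT₃0,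
            ← ENNReal.ofReal_add (add_nonneg (add_nonneg hT₁0 hT₂0) hT₃0) hT₄0]
      _ ≤ _ := ENNReal.ofReal_le_ofReal hnum
  -- conclude
  have hRHS0 : 0 ≤ (K * ((A₁ + A₂ + A₄) / Real.log 2 + A₃) + 1) * P * Real.log r :=
    mul_nonneg (mul_nonneg hCpos.le hP0.le) hL0.le
  calc |∫ y, u y / ‖x - y‖ ^ ((n:ℝ) - 2*s)|
      = ‖∫ y, u y / ‖x - y‖ ^ ((n:ℝ) - 2*s)‖ := (Real.norm_eq_abs _).symm
    _ ≤ (∫⁻ y : EuclideanSpace ℝ (Fin n),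
          ENNReal.ofReal ‖u y / ‖x - y‖ ^ ((n:ℝ) - 2*s)‖).toReal :=
        norm_integral_le_lintegral_norm _
    _ ≤ (K * ((A₁ + A₂ + A₄) / Real.log 2 + A₃) + 1) * P * Real.log r :=
        ENNReal.toReal_le_of_le_ofReal hRHS0 main
end
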